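/- arXiv:2407.07974 — 4 statements merged into one kernel-verified Lean document; each statement's English description precedes it below -/
import Mathlib

section
/- Let C be a regular, irreducible curve that is projective over a field k with H^0(C, O_C) = k, with function field F = k(C) and arithmetic genus t = dim_k H^1(C, O_C). Let D be a divisor on C of degree e ≥ 1, let n be the smallest integer such that n·e > 2t + e − 2, and set S̃ = |D| ∪ { P in C : H^0(C, O_C(nD − P)) ≠ {0} }. Then the map K₂(F) → ∐_{P ∉ S̃} k(P)^* induced by the tame symbol is surjective, and the cokernel of the tame symbol T : K₂(F) → ∐_{P ∈ C} k(P)^* is generated by the image of ∐_{P ∈ S̃} k(P)^*. -/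
open scoped TensorProduct

noncomputable section

/-- The set of Steinberg relations in `Fˣ ⊗_ℤ Fˣ` (written additively):
the elements `a ⊗ b` with `a + b = 1` in `F`. -/
def SteinbergSet (F : Type*) [Field F] :
    Set (TensorProduct ℤ (Additive Fˣ) (Additive Fˣ)) :=
  { x | ∃ a b : Fˣ, (a : F) + (b : F) = 1 ∧
      x = Additive.ofMul a ⊗ₜ[ℤ] Additive.ofMul b }

/-- Milnor's `K₂` of a field, via Matsumoto's presentation. -/
abbrev K2 (F : Type*) [Field F] :=
  (TensorProduct ℤ (Additive Fˣ) (Additive Fˣ)) ⧸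
    Submodule.span ℤ (SteinbergSet F)

/-- The symbol `{f, g}` in `K₂(F)`. -/
def symbol {F : Type*} [Field F] (f g : Fˣ) : K2 F :=
  Submodule.Quotient.mk (Additive.ofMul f ⊗ₜ[ℤ] Additive.ofMul g)

/-- The degree of a divisor `D` on the curve: `∑_P deg(P) · D(P)`,
where `deg P = [k(P) : k]`. -/
def divDeg (k : Type*) [Field k] {Pt : Type*} (res : Pt → Type*)
    [∀ P, Field (res P)] [∀ P, Algebra k (res P)] (D : Pt →₀ ℤ) : ℤ :=
  ∑ᶠ P, (Module.finrank k (res P) : ℤ) * D P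

/-- Axioms for a regular, irreducible curve `C`, projective over a field `k`, with
`H⁰(C, O_C) = k`, presented through: its function field `F = k(C)`, its set `Pt` of
closed points, the residue fields `res P = k(P)`, the normalized valuations `ord P`,
the evaluation maps `ev P` (evaluation at `P` of functions regular at `P`), the
Riemann-Roch spaces `L D = H⁰(C, O_C(D))`, and the arithmetic genus
`t = dim_k H¹(C, O_C)`, characterized by the Riemann-Roch relations. -/
structure IsProjCurve (k F : Type*) [Field k] [Field F] [Algebra k F]
    {Pt : Type*} (res : Pt → Type*) [∀ P, Field (res P)] [∀ P, Algebra k (res P)]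
    (ord : Pt → F → ℤ) (ev : ∀ P, F → res P)
    (L : (Pt →₀ ℤ) → Submodule k F) (t : ℕ) : Prop where
  finiteDimensional_res : ∀ P, FiniteDimensional k (res P)
  ord_mul : ∀ P (f g : F), f ≠ 0 → g ≠ 0 → ord P (f * g) = ord P f + ord P g
  ord_add : ∀ P (f g : F), f ≠ 0 → g ≠ 0 → f + g ≠ 0 →
      min (ord P f) (ord P g) ≤ ord P (f + g)
  ord_algebraMap : ∀ P (c : k), c ≠ 0 → ord P (algebraMap k F c) = 0
  ord_uniformizer : ∀ P, ∃ f : F, f ≠ 0 ∧ ord P f = 1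
  ord_separates : ∀ P Q, (∀ f : F, ord P f = ord Q f) → P = Q
  support_finite : ∀ f : F, f ≠ 0 → {P | ord P f ≠ 0}.Finite
  degree_formula : ∀ f : F, f ≠ 0 →
      ∑ᶠ P, (Module.finrank k (res P) : ℤ) * ord P f = 0
  ev_zero : ∀ P, ev P 0 = 0
  ev_one : ∀ P, ev P 1 = 1
  ev_add : ∀ P (f g : F), f ≠ 0 → g ≠ 0 → 0 ≤ ord P f → 0 ≤ ord P g →
      ev P (f + g) = ev P f + ev P g
  ev_mul : ∀ P (f g : F), f ≠ 0 → g ≠ 0 → 0 ≤ ord P f → 0 ≤ ord P g →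
      ev P (f * g) = ev P f * ev P g
  ev_algebraMap : ∀ P (c : k), ev P (algebraMap k F c) = algebraMap k (res P) c
  ev_eq_zero_iff : ∀ P (f : F), f ≠ 0 → 0 ≤ ord P f → (ev P f = 0 ↔ 0 < ord P f)
  ev_surjective : ∀ P (y : res P), ∃ f : F, f ≠ 0 ∧ 0 ≤ ord P f ∧ ev P f = y
  mem_L : ∀ (D : Pt →₀ ℤ) (f : F), f ∈ L D ↔ (f ≠ 0 → ∀ P, 0 ≤ D P + ord P f)
  finiteDimensional_L : ∀ D, FiniteDimensional k (L D)
  global_sections : ∀ f : F, f ∈ L 0 ↔ ∃ c : k, algebraMap k F c = f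
  rr_ineq : ∀ D : Pt →₀ ℤ,
      divDeg k res D + 1 - t ≤ (Module.finrank k (L D) : ℤ)
  rr_eq : ∀ D : Pt →₀ ℤ, 2 * (t : ℤ) - 2 < divDeg k res D →
      (Module.finrank k (L D) : ℤ) = divDeg k res D + 1 - t

/-- `T` is the tame symbol `K₂(F) → ∐_{P} k(P)^*`: it is determined by
`T_P({f,g}) = (-1)^{ord_P(f)·ord_P(g)} (f^{ord_P(g)} / g^{ord_P(f)})(P)`. -/
def IsTameSymbol {F : Type*} [Field F] {Pt : Type*} {res : Pt → Type*}
    [∀ P, Field (res P)]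
    (ord : Pt → F → ℤ) (ev : ∀ P, F → res P)
    (T : K2 F →+ Π₀ P : Pt, Additive ((res P)ˣ)) : Prop :=
  ∀ (f g : Fˣ) (P : Pt),
    ((Additive.toMul (T (symbol f g) P) : (res P)ˣ) : res P) =
      ev P (((-1 : Fˣ) ^ (ord P (f : F) * ord P (g : F)) *
        f ^ (ord P (g : F)) * g ^ (-ord P (f : F)) : Fˣ) : F)


/-!
A point `P ∉ S̃` is treated by induction on the least `m` with `L(mD - P) ≠ 0`. For
`λ = max(m - 1, n)` we have `L(λD - P) = 0`, while Riemann–Roch gives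
`dim L(λD) = λe + 1 - t > deg P / 2`; so the image of `L(λD)` in `k(P)` meets its translate by
a given `α ∈ k(P)^*`, giving `g, g' ∈ L(λD)` with `g'(P) = α g(P)`. Counting degrees, a nonzero
`h ∈ L(mD - P)` has a simple zero at `P` and no other zero or pole off `S̃`. Then
`T({h, g} - {h, g'})` is `α` at `P`, and off `S̃ ∪ {P}` it is nontrivial only at zeros `Q` of
`g` or `g'`. There `L(λD - Q) ≠ 0`, so `λ ≠ n` and `λ = m - 1`: these points are corrected by
induction.
-/

open Module

section DivDeg

variable (k : Type*) [Field k] {Pt : Type*} (res : Pt → Type*)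
  [∀ P, Field (res P)] [∀ P, Algebra k (res P)]

theorem divDeg_eq_linearCombination (D : Pt →₀ ℤ) :
    divDeg k res D = Finsupp.linearCombination ℤ (fun P => (finrank k (res P) : ℤ)) D := by
  rw [Finsupp.linearCombination_apply, Finsupp.sum, divDeg,
    finsum_eq_finsetSum_of_support_subset _ (s := D.support)]
  · simp only [smul_eq_mul, mul_comm]
  · intro P hP
    simp_all

theorem divDeg_zsmul (m : ℤ) (D : Pt →₀ ℤ) :
    divDeg k res (m • D) = m * divDeg k res D := by
  simp only [divDeg_eq_linearCombination, map_zsmul, smul_eq_mul]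

theorem divDeg_zsmul_sub_single (m : ℤ) (D : Pt →₀ ℤ) (P : Pt) :
    divDeg k res (m • D - Finsupp.single P 1) = m * divDeg k res D - finrank k (res P) := by
  simp only [divDeg_eq_linearCombination, map_sub, map_zsmul, smul_eq_mul,
    Finsupp.linearCombination_single, one_mul]

end DivDeg

theorem Submodule.exists_ne_zero_mem_mul_mem {k K : Type*} [Field k] [Ring K] [Algebra k K]
    [FiniteDimensional k K] (V : Submodule k K) (hV : finrank k K < 2 * finrank k V)
    (a : Kˣ) : ∃ v ∈ V, v ≠ 0 ∧ (a : K) * v ∈ V := by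
  set W := V.map (DistribMulAction.toLinearEquiv k K a : K →ₗ[k] K)
  have hW : finrank k W = finrank k V := LinearEquiv.finrank_map_eq _ V
  have hsup : finrank k ↥(V ⊔ W) ≤ finrank k K := Submodule.finrank_le _
  have hinf : V ⊓ W ≠ ⊥ := by
    intro h
    have := Submodule.finrank_sup_add_finrank_inf_eq V W
    rw [h, finrank_bot] at this
    omega
  obtain ⟨w, hw, hw0⟩ := (Submodule.ne_bot_iff _).mp hinf
  obtain ⟨v, hv, rfl⟩ := Submodule.mem_map.mp (Submodule.mem_inf.mp hw).2
  refine ⟨v, hv, fun h => hw0 (by simp [h]), (Submodule.mem_inf.mp hw).1⟩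

section SurjectiveAt

variable {A ι : Type*} [AddCommGroup A] {β : ι → Type*} [∀ i, AddCommGroup (β i)]

def SurjectiveAt (T : A →+ Π₀ i, β i) (S : Set ι) (i : ι) : Prop :=
  ∀ b : β i, ∃ x, T x i = b ∧ ∀ j ∉ S, j ≠ i → T x j = 0

variable {T : A →+ Π₀ i, β i} {S : Set ι}

theorem exists_apply_eq_of_surjectiveAt (y : Π₀ i, β i)
    (hy : ∀ i ∉ S, y i ≠ 0 → SurjectiveAt T S i) : ∃ x, ∀ i ∉ S, T x i = y i := by
  classical
  induction y using DFinsupp.induction with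
  | h0 => exact ⟨0, by simp⟩
  | ha i b f hfi hb ih =>
    obtain ⟨x, hx⟩ := ih fun j hj hfj => by
      have hji : j ≠ i := by rintro rfl; exact hfj hfi
      exact hy j hj (by simpa [DFinsupp.single_apply, hji.symm] using hfj)
    by_cases hi : i ∈ S
    · refine ⟨x, fun j hj => ?_⟩
      have hij : i ≠ j := by rintro rfl; exact hj hi
      simp [hx j hj, DFinsupp.single_apply, hij]
    · obtain ⟨xi, hxi, hxi0⟩ := hy i hi (by simpa [hfi] using hb) b
      refine ⟨xi + x, fun j hj => ?_⟩
      by_cases hij : i = j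
      · subst hij; simp [hxi, hx i hi, hfi]
      · simp [hxi0 j hj (Ne.symm hij), hx j hj, DFinsupp.single_apply, hij]

theorem surjectiveAt_of_forall_exists {i : ι} (hi : i ∉ S)
    (h : ∀ b : β i, ∃ x, T x i = b ∧ ∀ j ∉ S, j ≠ i → T x j ≠ 0 → SurjectiveAt T S j) :
    SurjectiveAt T S i := by
  classical
  intro b
  obtain ⟨x, hxi, hx⟩ := h b
  obtain ⟨x', hx'⟩ := exists_apply_eq_of_surjectiveAt (T := T) (S := S) ((T x).erase i)
    fun j hj hne => by
      have hji : j ≠ i := by rintro rfl; simp at hne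
      exact hx j hj hji (by simpa [DFinsupp.erase_apply, hji] using hne)
  refine ⟨x - x', by simp [hx' i hi, hxi], fun j hj hji => ?_⟩
  simp [hx' j hj, DFinsupp.erase_apply, hji]

end SurjectiveAt

namespace IsProjCurve

variable {k F : Type*} [Field k] [Field F] [Algebra k F]
  {Pt : Type*} {res : Pt → Type*} [∀ P, Field (res P)] [∀ P, Algebra k (res P)]
  {ord : Pt → F → ℤ} {ev : ∀ P, F → res P} {L : (Pt →₀ ℤ) → Submodule k F} {t : ℕ}
  (hC : IsProjCurve k F res ord ev L t)
include hC

section Valuation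

variable (P : Pt)

theorem ord_one : ord P 1 = 0 := by
  have := hC.ord_mul P 1 1 one_ne_zero one_ne_zero
  rw [mul_one] at this
  omega

theorem ord_inv {f : F} (hf : f ≠ 0) : ord P f⁻¹ = -ord P f := by
  have := hC.ord_mul P f f⁻¹ hf (inv_ne_zero hf)
  rw [mul_inv_cancel₀ hf, hC.ord_one] at this
  omega

theorem ev_inv {f : F} (hf : f ≠ 0) (h0 : ord P f = 0) : ev P f⁻¹ = (ev P f)⁻¹ := by
  have hinv : ord P f⁻¹ = 0 := by rw [hC.ord_inv P hf, h0, neg_zero]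
  refine (eq_inv_of_mul_eq_one_left ?_)
  rw [mul_comm, ← hC.ev_mul P f f⁻¹ hf (inv_ne_zero hf) h0.ge hinv.ge, mul_inv_cancel₀ hf,
    hC.ev_one]

theorem ev_ne_zero {f : F} (hf : f ≠ 0) (h0 : ord P f = 0) : ev P f ≠ 0 := fun h => by
  have := (hC.ev_eq_zero_iff P f hf h0.ge).mp h
  omega

theorem ord_eq_zero_of_ev_ne_zero {f : F} (hf : f ≠ 0) (hord : 0 ≤ ord P f)
    (hev : ev P f ≠ 0) : ord P f = 0 := by
  by_contra hne
  exact hev ((hC.ev_eq_zero_iff P f hf hord).mpr (lt_of_le_of_ne hord (Ne.symm hne)))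

theorem one_le_finrank_res : 1 ≤ (finrank k (res P) : ℤ) := by
  have := hC.finiteDimensional_res P
  exact_mod_cast Module.finrank_pos

end Valuation

section RiemannRoch

variable {E : Pt →₀ ℤ}

theorem ord_nonneg_of_mem_L {P : Pt} (hEP : E P = 0) {f : F} (hf : f ∈ L E) (hf0 : f ≠ 0) :
    0 ≤ ord P f := by
  simpa [hEP] using (hC.mem_L E f).mp hf hf0 P

theorem sub_single_ne_bot {P : Pt} {f : F} (hf : f ∈ L E) (hf0 : f ≠ 0)
    (hP : 0 < E P + ord P f) : L (E - Finsupp.single P 1) ≠ ⊥ := by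
  refine (Submodule.ne_bot_iff _).mpr ⟨f, (hC.mem_L _ f).mpr fun _ Q => ?_, hf0⟩
  have hQ := (hC.mem_L E f).mp hf hf0 Q
  by_cases hPQ : P = Q
  · subst hPQ; simp only [Finsupp.sub_apply, Finsupp.single_eq_same]; omega
  · simpa [Finsupp.single_apply, hPQ] using hQ

theorem hasFiniteSupport_ord {f : F} (hf0 : f ≠ 0) : (fun P => ord P f).HasFiniteSupport :=
  hC.support_finite f hf0

/-- The principal divisor of `f` has degree zero (`degree_formula`). -/
theorem divDeg_eq_finsum_add {f : F} (hf0 : f ≠ 0) :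
    divDeg k res E = ∑ᶠ P, (finrank k (res P) : ℤ) * (E P + ord P f) := by
  simp only [mul_add]
  rw [finsum_add_distrib (f := fun P => (finrank k (res P) : ℤ) * E P)
    (g := fun P => (finrank k (res P) : ℤ) * ord P f)
    (E.hasFiniteSupport.mul_right _) ((hC.hasFiniteSupport_ord hf0).mul_right _),
    hC.degree_formula f hf0, add_zero, divDeg]

theorem le_divDeg_of_mem_L {f : F} (hf : f ∈ L E) (hf0 : f ≠ 0) (R : Pt) :
    (finrank k (res R) : ℤ) * (E R + ord R f) ≤ divDeg k res E := by
  rw [hC.divDeg_eq_finsum_add hf0]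
  exact single_le_finsum R
    ((E.hasFiniteSupport.add (hC.hasFiniteSupport_ord hf0)).mul_right _)
    fun Q => mul_nonneg (Int.natCast_nonneg _) ((hC.mem_L E f).mp hf hf0 Q)

theorem divDeg_nonneg_of_ne_bot (h : L E ≠ ⊥) : 0 ≤ divDeg k res E := by
  obtain ⟨f, hf, hf0⟩ := (Submodule.ne_bot_iff _).mp h
  rw [hC.divDeg_eq_finsum_add hf0]
  exact finsum_nonneg fun Q => mul_nonneg (Int.natCast_nonneg _) ((hC.mem_L E f).mp hf hf0 Q)

theorem ord_eq_neg_of_divDeg_lt {f : F} (hf : f ∈ L E) (hf0 : f ≠ 0) {R : Pt}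
    (h : divDeg k res E < finrank k (res R)) : ord R f = -E R := by
  have hle := hC.le_divDeg_of_mem_L hf hf0 R
  have hnonneg := (hC.mem_L E f).mp hf hf0 R
  have hR := hC.one_le_finrank_res R
  by_contra hne
  have : (finrank k (res R) : ℤ) ≤ finrank k (res R) * (E R + ord R f) :=
    le_mul_of_one_le_right (by omega) (by omega)
  omega

theorem divDeg_lt_of_eq_bot (h : L E = ⊥) : divDeg k res E < t := by
  have := hC.rr_ineq E
  rw [h, finrank_bot] at this
  omega

theorem ne_bot_of_le_divDeg (h : (t : ℤ) ≤ divDeg k res E) : L E ≠ ⊥ :=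
  fun hb => (hC.divDeg_lt_of_eq_bot hb).not_ge h

end RiemannRoch

section Evaluation

variable {E : Pt →₀ ℤ} {P : Pt}

def evalLinearMap (hEP : E P = 0) : L E →ₗ[k] res P where
  toFun f := ev P f
  map_add' := by
    rintro ⟨f, hf⟩ ⟨g, hg⟩
    change ev P (f + g) = ev P f + ev P g
    rcases eq_or_ne f 0 with rfl | hf0
    · rw [zero_add, hC.ev_zero, zero_add]
    rcases eq_or_ne g 0 with rfl | hg0
    · rw [add_zero, hC.ev_zero, add_zero]
    exact hC.ev_add P f g hf0 hg0 (hC.ord_nonneg_of_mem_L hEP hf hf0)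
      (hC.ord_nonneg_of_mem_L hEP hg hg0)
  map_smul' := by
    rintro c ⟨f, hf⟩
    change ev P (c • f) = c • ev P f
    rcases eq_or_ne c 0 with rfl | hc
    · rw [zero_smul, zero_smul, hC.ev_zero]
    rcases eq_or_ne f 0 with rfl | hf0
    · rw [smul_zero, hC.ev_zero, smul_zero]
    rw [Algebra.smul_def, Algebra.smul_def, hC.ev_mul P _ f (by simpa using hc) hf0
      (hC.ord_algebraMap P c hc).ge (hC.ord_nonneg_of_mem_L hEP hf hf0), hC.ev_algebraMap]

theorem evalLinearMap_apply (hEP : E P = 0) (f : L E) : hC.evalLinearMap hEP f = ev P f := rfl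

theorem evalLinearMap_injective (hEP : E P = 0) (hbot : L (E - Finsupp.single P 1) = ⊥) :
    Function.Injective (hC.evalLinearMap hEP) := by
  refine (injective_iff_map_eq_zero _).mpr fun ⟨f, hf⟩ hev => Subtype.ext ?_
  by_contra hf0
  have hord := hC.ord_nonneg_of_mem_L hEP hf hf0
  have hpos := (hC.ev_eq_zero_iff P f hf0 hord).mp hev
  exact hC.sub_single_ne_bot hf hf0 (by omega) hbot

/-- The image of `L(E)` in `k(P)` has dimension `dim L(E) > deg P / 2`, so it meets its
translate by `α`. -/
theorem exists_ev_eq_mul_ev (hEP : E P = 0) (hbot : L (E - Finsupp.single P 1) = ⊥)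
    (hdim : finrank k (res P) < 2 * finrank k (L E)) (α : (res P)ˣ) :
    ∃ g g' : F, g ∈ L E ∧ g' ∈ L E ∧ g ≠ 0 ∧ g' ≠ 0 ∧ ord P g = 0 ∧ ord P g' = 0 ∧
      ev P g' = α * ev P g := by
  have := hC.finiteDimensional_res P
  have := hC.finiteDimensional_L E
  have hrange := LinearMap.finrank_range_of_inj (hC.evalLinearMap_injective hEP hbot)
  obtain ⟨_, ⟨g, rfl⟩, hg, ⟨g', hg'⟩⟩ :=
    (LinearMap.range (hC.evalLinearMap hEP)).exists_ne_zero_mem_mul_mem (by omega) α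
  simp only [evalLinearMap_apply] at hg hg'
  have hg'ne : ev P g' ≠ 0 := by rw [hg']; exact mul_ne_zero α.ne_zero hg
  have hg0 : (g : F) ≠ 0 := fun h => hg (by rw [h, hC.ev_zero])
  have hg'0 : (g' : F) ≠ 0 := fun h => hg'ne (by rw [h, hC.ev_zero])
  refine ⟨g, g', g.2, g'.2, hg0, hg'0,
    hC.ord_eq_zero_of_ev_ne_zero P hg0 (hC.ord_nonneg_of_mem_L hEP g.2 hg0) hg,
    hC.ord_eq_zero_of_ev_ne_zero P hg'0 (hC.ord_nonneg_of_mem_L hEP g'.2 hg'0) hg'ne, hg'⟩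

end Evaluation

section TameSymbol

variable {T : K2 F →+ Π₀ P : Pt, Additive ((res P)ˣ)} (hT : IsTameSymbol ord ev T)
  {f g : Fˣ} {P : Pt}
include hT

theorem tameSymbol_apply_eq_zero (hf : ord P f = 0) (hg : ord P g = 0) :
    T (symbol f g) P = 0 := by
  apply Additive.toMul.injective
  apply Units.ext
  rw [hT f g P, hf, hg]
  simp [hC.ev_one]

theorem tameSymbol_apply_of_ord_eq_one (hf : ord P f = 1) (hg : ord P g = 0) :
    ((Additive.toMul (T (symbol f g) P) : (res P)ˣ) : res P) = (ev P g)⁻¹ := by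
  rw [hT f g P, hf, hg]
  simpa using hC.ev_inv P g.ne_zero hg

end TameSymbol

section Lifting

variable {T : K2 F →+ Π₀ P : Pt, Additive ((res P)ˣ)} {D : Pt →₀ ℤ} {e n : ℤ} {S : Set Pt}

theorem add_lt_finrank_res (he : divDeg k res D = e) (hn : 2 * (t : ℤ) + e - 2 < n * e)
    (hS : ∀ Q ∉ S, D Q = 0 ∧ L (n • D - Finsupp.single Q 1) = ⊥) {Q : Pt} (hQ : Q ∉ S) :
    e + t - 1 < finrank k (res Q) := by
  have := hC.divDeg_lt_of_eq_bot (hS Q hQ).2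
  rw [divDeg_zsmul_sub_single, he] at this
  omega

theorem exists_ord_eq_one (he : divDeg k res D = e) (hn : 2 * (t : ℤ) + e - 2 < n * e)
    (hS : ∀ Q ∉ S, D Q = 0 ∧ L (n • D - Finsupp.single Q 1) = ⊥) {M : ℤ} {P : Pt}
    (hP : P ∉ S) (hPM : L (M • D - Finsupp.single P 1) ≠ ⊥)
    (hM : M * e - finrank k (res P) ≤ e + t - 1) :
    ∃ h : F, h ≠ 0 ∧ ord P h = 1 ∧ ∀ Q ∉ S, Q ≠ P → ord Q h = 0 := by
  obtain ⟨h, hh, hh0⟩ := (Submodule.ne_bot_iff _).mp hPM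
  have hlt : ∀ Q ∉ S, divDeg k res (M • D - Finsupp.single P 1) < finrank k (res Q) :=
    fun Q hQ => by
      have := hC.add_lt_finrank_res he hn hS hQ
      rw [divDeg_zsmul_sub_single, he]
      omega
  refine ⟨h, hh0, ?_, fun Q hQ hQP => ?_⟩
  · rw [hC.ord_eq_neg_of_divDeg_lt hh hh0 (hlt P hP)]
    simp [(hS P hP).1]
  · rw [hC.ord_eq_neg_of_divDeg_lt hh hh0 (hlt Q hQ)]
    simp [(hS Q hQ).1, Ne.symm hQP]

theorem surjectiveAt_of_ne_bot_of_eq_bot (hT : IsTameSymbol ord ev T) (he : divDeg k res D = e)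
    (he1 : 1 ≤ e) (hn : 2 * (t : ℤ) + e - 2 < n * e)
    (hS : ∀ Q ∉ S, D Q = 0 ∧ L (n • D - Finsupp.single Q 1) = ⊥) {lam M : ℤ} {P : Pt}
    (hlam : n ≤ lam) (hP : P ∉ S) (hPbot : L (lam • D - Finsupp.single P 1) = ⊥)
    (hM : M ≤ lam + 1) (hPM : L (M • D - Finsupp.single P 1) ≠ ⊥)
    (ih : ∀ Q ∉ S, L (lam • D - Finsupp.single Q 1) ≠ ⊥ → SurjectiveAt T S Q) :
    SurjectiveAt T S P := by
  have hPlow := hC.divDeg_lt_of_eq_bot hPbot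
  have hPup := hC.divDeg_nonneg_of_ne_bot hPM
  rw [divDeg_zsmul_sub_single, he] at hPlow hPup
  have hlame : n * e ≤ lam * e := mul_le_mul_of_nonneg_right hlam (by omega)
  have hMe : M * e ≤ (lam + 1) * e := mul_le_mul_of_nonneg_right hM (by omega)
  obtain ⟨h, hh0, hhP, hhQ⟩ := hC.exists_ord_eq_one he hn hS hP hPM (by linarith)
  have hrank : (finrank k (L (lam • D)) : ℤ) = lam * e + 1 - t := by
    rw [hC.rr_eq _ (by rw [divDeg_zsmul, he]; linarith), divDeg_zsmul, he]
  have hzero : ∀ Q ∉ S, (lam • D) Q = 0 := fun Q hQ => by simp [(hS Q hQ).1]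
  refine surjectiveAt_of_forall_exists hP fun b => ?_
  obtain ⟨g, g', hg, hg', hg0, hg'0, hgP, hg'P, hev⟩ :=
    hC.exists_ev_eq_mul_ev (hzero P hP) hPbot (by zify; linarith) (Additive.toMul b)
  refine ⟨symbol (Units.mk0 h hh0) (Units.mk0 g hg0) - symbol (Units.mk0 h hh0)
    (Units.mk0 g' hg'0), ?_, fun Q hQ hQP hne => ih Q hQ ?_⟩
  · apply Additive.toMul.injective
    apply Units.ext
    rw [map_sub, DFinsupp.sub_apply, toMul_sub, Units.val_div_eq_div_val,
      hC.tameSymbol_apply_of_ord_eq_one hT hhP hgP,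
      hC.tameSymbol_apply_of_ord_eq_one hT hhP hg'P]
    simp only [Units.val_mk0, hev]
    field_simp [hC.ev_ne_zero P hg0 hgP]
  · have hzeros : ord Q g ≠ 0 ∨ ord Q g' ≠ 0 := by
      by_contra! hz
      apply hne
      rw [map_sub, DFinsupp.sub_apply,
        hC.tameSymbol_apply_eq_zero hT (hhQ Q hQ hQP) hz.1,
        hC.tameSymbol_apply_eq_zero hT (hhQ Q hQ hQP) hz.2, sub_zero]
    rcases hzeros with hgQ | hg'Q
    · have := hC.ord_nonneg_of_mem_L (hzero Q hQ) hg hg0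
      exact hC.sub_single_ne_bot hg hg0 (by rw [hzero Q hQ]; omega)
    · have := hC.ord_nonneg_of_mem_L (hzero Q hQ) hg' hg'0
      exact hC.sub_single_ne_bot hg' hg'0 (by rw [hzero Q hQ]; omega)

theorem surjectiveAt_of_ne_bot (hT : IsTameSymbol ord ev T) (he : divDeg k res D = e)
    (he1 : 1 ≤ e) (hn : 2 * (t : ℤ) + e - 2 < n * e)
    (hS : ∀ Q ∉ S, D Q = 0 ∧ L (n • D - Finsupp.single Q 1) = ⊥) (m : ℕ) :
    ∀ P ∉ S, L ((m : ℤ) • D - Finsupp.single P 1) ≠ ⊥ → SurjectiveAt T S P := by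
  induction m with
  | zero =>
    intro P _ hPM
    have hdeg := hC.divDeg_nonneg_of_ne_bot hPM
    rw [divDeg_zsmul_sub_single] at hdeg
    have := hC.one_le_finrank_res P
    omega
  | succ m ih =>
    intro P hP hPM
    by_cases hPm : L ((m : ℤ) • D - Finsupp.single P 1) = ⊥
    · rcases le_total (m : ℤ) n with hmn | hnm
      · exact hC.surjectiveAt_of_ne_bot_of_eq_bot hT he he1 hn hS le_rfl hP (hS P hP).2
          (by omega) hPM fun Q hQ hQn => absurd (hS Q hQ).2 hQn
      · exact hC.surjectiveAt_of_ne_bot_of_eq_bot hT he he1 hn hS hnm hP hPm (by omega) hPM ih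
    · exact ih P hP hPm

theorem surjectiveAt (hT : IsTameSymbol ord ev T) (he : divDeg k res D = e)
    (he1 : 1 ≤ e) (hn : 2 * (t : ℤ) + e - 2 < n * e)
    (hS : ∀ Q ∉ S, D Q = 0 ∧ L (n • D - Finsupp.single Q 1) = ⊥) {P : Pt} (hP : P ∉ S) :
    SurjectiveAt T S P := by
  refine hC.surjectiveAt_of_ne_bot hT he he1 hn hS (t + finrank k (res P)) P hP
    (hC.ne_bot_of_le_divDeg ?_)
  rw [divDeg_zsmul_sub_single, he]
  push_cast
  nlinarith

end Lifting

end IsProjCurve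

theorem statement0_general (k F : Type*) [Field k] [Field F] [Algebra k F]
    {Pt : Type*} (res : Pt → Type*) [∀ P, Field (res P)] [∀ P, Algebra k (res P)]
    (ord : Pt → F → ℤ) (ev : ∀ P, F → res P)
    (L : (Pt →₀ ℤ) → Submodule k F) (t : ℕ)
    (hC : IsProjCurve k F res ord ev L t)
    (T : K2 F →+ Π₀ P : Pt, Additive ((res P)ˣ)) (hT : IsTameSymbol ord ev T)
    (D : Pt →₀ ℤ) (e : ℤ) (he : divDeg k res D = e) (he1 : 1 ≤ e)
    (n : ℤ) (hn : 2 * (t : ℤ) + e - 2 < n * e)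
    (Stilde : Set Pt)
    (hSt : Stilde = {P | D P ≠ 0} ∪ {P | L (n • D - Finsupp.single P 1) ≠ ⊥}) :
    (∀ y : Π₀ P : Pt, Additive ((res P)ˣ),
      ∃ x : K2 F, ∀ P ∉ Stilde, T x P = y P) ∧
    (∀ y : Π₀ P : Pt, Additive ((res P)ˣ),
      ∃ x : K2 F, ∃ z : Π₀ P : Pt, Additive ((res P)ˣ),
        (∀ P ∉ Stilde, z P = 0) ∧ y = T x + z) := by
  have hS : ∀ Q ∉ Stilde, D Q = 0 ∧ L (n • D - Finsupp.single Q 1) = ⊥ := by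
    subst hSt
    simp
  have hsurj : ∀ y : Π₀ P : Pt, Additive ((res P)ˣ), ∃ x : K2 F, ∀ P ∉ Stilde, T x P = y P :=
    fun y => exists_apply_eq_of_surjectiveAt y fun P hP _ =>
      hC.surjectiveAt hT he he1 hn hS hP
  refine ⟨hsurj, fun y => ?_⟩
  obtain ⟨x, hx⟩ := hsurj y
  exact ⟨x, y - T x, fun P hP => by simp [hx P hP], by abel⟩

/-- Proposition `introcoker`.  Let `C` be a regular, irreducible curve,
projective over a field `k`, with `H⁰(C,O_C) = k`, function field `F` and arithmetic
genus `t`.  Let `D` be a divisor of degree `e ≥ 1`, `n` the smallest integer with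
`n·e > 2t + e - 2`, and `S̃ = |D| ∪ {P : H⁰(C, O_C(nD - P)) ≠ 0}`.  Then the map
`K₂(F) → ∐_{P ∉ S̃} k(P)^*` induced by the tame symbol is surjective, and the cokernel
of the tame symbol is generated by the image of `∐_{P ∈ S̃} k(P)^*`. -/
theorem statement0 (k F : Type*) [Field k] [Field F] [Algebra k F]
    {Pt : Type*} (res : Pt → Type*) [∀ P, Field (res P)] [∀ P, Algebra k (res P)]
    (ord : Pt → F → ℤ) (ev : ∀ P, F → res P)
    (L : (Pt →₀ ℤ) → Submodule k F) (t : ℕ)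
    (hC : IsProjCurve k F res ord ev L t)
    (T : K2 F →+ Π₀ P : Pt, Additive ((res P)ˣ)) (hT : IsTameSymbol ord ev T)
    (D : Pt →₀ ℤ) (e : ℤ) (he : divDeg k res D = e) (he1 : 1 ≤ e)
    (n : ℤ) (hn : 2 * (t : ℤ) + e - 2 < n * e)
    (hnmin : ∀ m : ℤ, 2 * (t : ℤ) + e - 2 < m * e → n ≤ m)
    (Stilde : Set Pt)
    (hSt : Stilde = {P | D P ≠ 0} ∪ {P | L (n • D - Finsupp.single P 1) ≠ ⊥}) :
    (∀ y : Π₀ P : Pt, Additive ((res P)ˣ),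
      ∃ x : K2 F, ∀ P ∉ Stilde, T x P = y P) ∧
    (∀ y : Π₀ P : Pt, Additive ((res P)ˣ),
      ∃ x : K2 F, ∃ z : Π₀ P : Pt, Additive ((res P)ˣ),
        (∀ P ∉ Stilde, z P = 0) ∧ y = T x + z) :=
  statement0_general k F res ord ev L t hC T hT D e he he1 n hn Stilde hSt
end
end

section
/- Let C be a regular, irreducible curve that is projective over a field k, with function field F = k(C), arithmetic genus t, and a k-rational point O. Let P ≠ O be a closed point with d = deg(P) ≥ t + 1, and let f_P in F^* have divisor (P) − D_P − (d − t)(O) with D_P effective of degree t. Then f_P lies in the subgroup of F^* generated by the nonzero elements of RR_{d+t}. -/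
open scoped TensorProduct

noncomputable section

section Aux

variable {k : Type*} [Field k] {Pt : Type*} {res : Pt → Type*}
  [∀ P, Field (res P)] [∀ P, Algebra k (res P)]

lemma divDeg_add (D1 D2 : Pt →₀ ℤ) :
    divDeg k res (D1 + D2) = divDeg k res D1 + divDeg k res D2 := by
  unfold divDeg
  have h1 : (Function.support fun Q => ((Module.finrank k (res Q) : ℤ) * D1 Q)).Finite :=
    D1.finite_support.subset (fun Q hQ => right_ne_zero_of_mul hQ)
  have h2 : (Function.support fun Q => ((Module.finrank k (res Q) : ℤ) * D2 Q)).Finite :=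
    D2.finite_support.subset (fun Q hQ => right_ne_zero_of_mul hQ)
  calc ∑ᶠ Q, (Module.finrank k (res Q) : ℤ) * (D1 + D2) Q
      = ∑ᶠ Q, ((Module.finrank k (res Q) : ℤ) * D1 Q
          + (Module.finrank k (res Q) : ℤ) * D2 Q) := by
        apply finsum_congr; intro Q; simp [Finsupp.add_apply, mul_add]
    _ = _ := finsum_add_distrib h1 h2

lemma divDeg_single (O : Pt) (n : ℤ) :
    divDeg k res (Finsupp.single O n) = (Module.finrank k (res O) : ℤ) * n := by
  classical
  unfold divDeg
  rw [finsum_eq_single _ O]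
  · simp
  · intro Q hQ
    rw [Finsupp.single_apply, if_neg (fun h => hQ h.symm), mul_zero]

end Aux

/-- Lemma `3tlemma`(2).  Let `C` be a regular, irreducible curve,
projective over `k`, with function field `F`, arithmetic genus `t` and a `k`-rational
point `O`.  If `P ≠ O` has `d = deg(P) ≥ t + 1` and `f_P ∈ F^*` has divisor
`(P) - D_P - (d - t)(O)` with `D_P` effective of degree `t`, then `f_P` lies in the
subgroup of `F^*` generated by the nonzero elements of `RR_{d+t}`. -/
theorem statement9 (k F : Type*) [Field k] [Field F] [Algebra k F]
    {Pt : Type*} (res : Pt → Type*) [∀ P, Field (res P)] [∀ P, Algebra k (res P)]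
    (ord : Pt → F → ℤ) (ev : ∀ P, F → res P)
    (L : (Pt →₀ ℤ) → Submodule k F) (t : ℕ)
    (hC : IsProjCurve k F res ord ev L t)
    (O : Pt) (hO : Module.finrank k (res O) = 1)
    (P : Pt) (hP : P ≠ O) (d : ℕ) (hd : d = Module.finrank k (res P))
    (hdt : t + 1 ≤ d)
    (fP : Fˣ) (DP : Pt →₀ ℤ) (hDPeff : ∀ Q, 0 ≤ DP Q) (hDPdeg : divDeg k res DP = t)
    (hfP : ∀ Q, ord Q (fP : F) =
      ((Finsupp.single P 1 - DP - ((d : ℤ) - t) • Finsupp.single O 1 : Pt →₀ ℤ)) Q) :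
    fP ∈ Subgroup.closure {g : Fˣ | (g : F) ∈ L (Finsupp.single O ((d : ℤ) + t))} := by
  classical
  -- the auxiliary divisor `E = 2t·(O) - D_P`
  set E : Pt →₀ ℤ := Finsupp.single O (2 * (t : ℤ)) - DP with hE
  have hdegE : divDeg k res E = t := by
    have : divDeg k res (E + DP) = divDeg k res E + divDeg k res DP := divDeg_add _ _
    have hEDP : E + DP = Finsupp.single O (2 * (t : ℤ)) := by simp [hE]
    rw [hEDP, divDeg_single, hO, hDPdeg] at this
    push_cast at this
    linarith
  -- `L E` is nonzero
  haveI : FiniteDimensional k (L E) := hC.finiteDimensional_L E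
  have hrank : 0 < Module.finrank k (L E) := by
    have := hC.rr_ineq E
    rw [hdegE] at this
    omega
  have : Nontrivial (L E) := Module.finrank_pos_iff.mp hrank
  obtain ⟨⟨h, hhL⟩, hh0⟩ := exists_ne (0 : L E)
  have hne : h ≠ 0 := by
    intro hc; exact hh0 (by simp [Subtype.ext_iff, hc])
  have hordh : ∀ Q, 0 ≤ E Q + ord Q h := (hC.mem_L E h).mp hhL hne
  -- basic facts
  have hfPne : (fP : F) ≠ 0 := fP.ne_zero
  have htd : (t : ℤ) + 1 ≤ (d : ℤ) := by exact_mod_cast hdt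
  -- evaluate E
  have hEQ : ∀ Q, E Q = (if O = Q then 2 * (t : ℤ) else 0) - DP Q := by
    intro Q; rw [hE, Finsupp.sub_apply, Finsupp.single_apply]
  -- `h ∈ L ((d+t)·O)`
  have hmem1 : h ∈ L (Finsupp.single O ((d : ℤ) + t)) := by
    rw [hC.mem_L]
    intro _ Q
    have h1 := hordh Q
    rw [hEQ Q] at h1
    have h2 := hDPeff Q
    simp only [Finsupp.single_apply]
    by_cases hOQ : O = Q <;> simp [hOQ] at h1 ⊢ <;> linarith
  -- `fP * h ∈ L ((d+t)·O)`
  have hmem2 : (fP : F) * h ∈ L (Finsupp.single O ((d : ℤ) + t)) := by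
    rw [hC.mem_L]
    intro _ Q
    rw [hC.ord_mul Q _ _ hfPne hne]
    have h1 := hordh Q
    rw [hEQ Q] at h1
    have h2 := hfP Q
    simp only [Finsupp.sub_apply, Finsupp.smul_apply, Finsupp.single_apply,
      smul_eq_mul] at h2
    simp only [Finsupp.single_apply]
    by_cases hOQ : O = Q
    · have hPQ : ¬ P = Q := fun h => hP (h.trans hOQ.symm)
      simp only [if_pos hOQ, if_neg hPQ] at h1 h2 ⊢
      linarith
    · by_cases hPQ : P = Q <;>
        simp only [if_pos, if_neg hOQ, if_neg, hPQ, if_true, if_false] at h1 h2 ⊢ <;>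
        linarith
  -- assemble
  set S : Set Fˣ := {g : Fˣ | (g : F) ∈ L (Finsupp.single O ((d : ℤ) + t))} with hS
  set hu : Fˣ := Units.mk0 h hne with hhu
  have m1 : hu ∈ Subgroup.closure S :=
    Subgroup.subset_closure (by
      simp only [hS, Set.mem_setOf_eq, hhu, Units.val_mk0]; exact hmem1)
  have m2 : fP * hu ∈ Subgroup.closure S :=
    Subgroup.subset_closure (by
      simp only [hS, Set.mem_setOf_eq, hhu, Units.val_mul, Units.val_mk0]; exact hmem2)
  have hfin := mul_mem m2 (inv_mem m1)
  rw [mul_inv_cancel_right] at hfin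
  exact hfin


end
end

section
/- Let C be a regular, irreducible curve that is projective over a field k, with function field F = k(C), arithmetic genus t, and a k-rational point O. Let P ≠ O be a closed point of degree d ≥ t + 1, and let f_P in F^* have divisor (P) − D_P − (d − t)(O) with D_P effective of degree t. If d' is an integer with 2t ≤ d' ≤ d + t and RR_{d'}((P)) ≠ {0}, then f_P lies in the subgroup of F^* generated by the nonzero elements of RR_{d'}. -/
open scoped TensorProduct

noncomputable section

/-- Lemma `3tlemma`(3).  Let `C` be a regular, irreducible curve,
projective over `k`, with function field `F`, arithmetic genus `t` and a `k`-rational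
point `O`.  Let `P ≠ O` have degree `d ≥ t + 1` and let `f_P ∈ F^*` have divisor
`(P) - D_P - (d - t)(O)` with `D_P` effective of degree `t`.  If `2t ≤ d' ≤ d + t`
and `RR_{d'}((P)) ≠ 0`, then `f_P` lies in the subgroup of `F^*` generated by the
nonzero elements of `RR_{d'}`. -/
theorem statement10 (k F : Type*) [Field k] [Field F] [Algebra k F]
    {Pt : Type*} (res : Pt → Type*) [∀ P, Field (res P)] [∀ P, Algebra k (res P)]
    (ord : Pt → F → ℤ) (ev : ∀ P, F → res P)
    (L : (Pt →₀ ℤ) → Submodule k F) (t : ℕ)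
    (hC : IsProjCurve k F res ord ev L t)
    (O : Pt) (hO : Module.finrank k (res O) = 1)
    (P : Pt) (hP : P ≠ O) (d : ℕ) (hd : d = Module.finrank k (res P))
    (hdt : t + 1 ≤ d)
    (fP : Fˣ) (DP : Pt →₀ ℤ) (hDPeff : ∀ Q, 0 ≤ DP Q) (hDPdeg : divDeg k res DP = t)
    (hfP : ∀ Q, ord Q (fP : F) =
      ((Finsupp.single P 1 - DP - ((d : ℤ) - t) • Finsupp.single O 1 : Pt →₀ ℤ)) Q)
    (d' : ℕ) (hd'1 : 2 * t ≤ d') (hd'2 : d' ≤ d + t)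
    (hRR : L (Finsupp.single O (d' : ℤ) - Finsupp.single P 1) ≠ ⊥) :
    fP ∈ Subgroup.closure {g : Fˣ | (g : F) ∈ L (Finsupp.single O (d' : ℤ))} := by

  classical
  -- pick a nonzero h in L(d'(O) - (P))
  obtain ⟨h, hhL, hh0⟩ := (Submodule.ne_bot_iff _).mp hRR
  have hOrd1 : ord O (1 : F) = 0 := by
    have := hC.ord_algebraMap O 1 one_ne_zero
    simpa using this
  -- ord of 1 at any point
  have hord_one : ∀ Q, ord Q (1 : F) = 0 := fun Q => by
    have := hC.ord_algebraMap Q 1 one_ne_zero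
    simpa using this
  have hfP0 : (fP : F) ≠ 0 := fP.ne_zero
  have hfPinv0 : ((fP⁻¹ : Fˣ) : F) ≠ 0 := (fP⁻¹).ne_zero
  -- ord of fP⁻¹
  have hord_inv : ∀ Q, ord Q ((fP⁻¹ : Fˣ) : F) = - ord Q (fP : F) := by
    intro Q
    have hmul := hC.ord_mul Q (fP : F) ((fP⁻¹ : Fˣ) : F) hfP0 hfPinv0
    have : ((fP : F) * ((fP⁻¹ : Fˣ) : F)) = 1 := by
      rw [← Units.val_mul, mul_inv_cancel, Units.val_one]
    rw [this, hord_one Q] at hmul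
    linarith
  -- key order estimates from h ∈ L(d'(O)-(P))
  have hhmem := (hC.mem_L _ h).mp hhL hh0
  have hu : Fˣ := Units.mk0 h hh0
  set hu : Fˣ := Units.mk0 h hh0 with hhu
  -- h ∈ L(d'(O))
  have h1 : (hu : F) ∈ L (Finsupp.single O (d' : ℤ)) := by
    rw [hC.mem_L]
    intro _ Q
    have := hhmem Q
    simp only [hhu, Units.val_mk0]
    simp only [Finsupp.sub_apply, Finsupp.single_apply] at this ⊢
    split_ifs at this ⊢ <;> omega
  -- h / fP ∈ L(d'(O))
  have hg0 : (h * ((fP⁻¹ : Fˣ) : F)) ≠ 0 := mul_ne_zero hh0 hfPinv0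
  have h2 : ((hu * fP⁻¹ : Fˣ) : F) ∈ L (Finsupp.single O (d' : ℤ)) := by
    rw [hC.mem_L]
    intro _ Q
    have hmul := hC.ord_mul Q h ((fP⁻¹ : Fˣ) : F) hh0 hfPinv0
    have hQ := hhmem Q
    have hfQ := hfP Q
    have hDPQ := hDPeff Q
    have hval : ((hu * fP⁻¹ : Fˣ) : F) = h * ((fP⁻¹ : Fˣ) : F) := by
      simp [hhu]
    rw [hval, hmul, hord_inv Q, hfQ]
    simp only [Finsupp.sub_apply, Finsupp.smul_apply, Finsupp.single_apply,
      smul_eq_mul] at hQ ⊢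
    split_ifs at hQ ⊢ <;>
      simp only [mul_one, mul_zero] at hQ ⊢ <;> omega
  -- conclude
  have m1 : hu ∈ Subgroup.closure {g : Fˣ | (g : F) ∈ L (Finsupp.single O (d' : ℤ))} :=
    Subgroup.subset_closure h1
  have m2 : hu * fP⁻¹ ∈ Subgroup.closure
      {g : Fˣ | (g : F) ∈ L (Finsupp.single O (d' : ℤ))} :=
    Subgroup.subset_closure h2
  have : fP = (hu * fP⁻¹)⁻¹ * hu := by
    rw [mul_inv_rev, inv_inv, inv_mul_cancel_right]
  rw [this]
  exact mul_mem (inv_mem m2) m1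


end
end

section
/- Let C be a regular, irreducible curve that is projective over a field k, with function field F = k(C), arithmetic genus t, and a k-rational point O. For every integer d ≥ 2t, the subgroup F_d of K₂(F) is contained in the subgroup L_{d+t}. -/
open scoped TensorProduct

noncomputable section

/-- `F_d`: the subgroup of `K₂(F)` generated by the symbols `{f, g}` with
`|(f)| ∪ |(g)| ⊆ C_{≤ d}`. -/
def Fsub (k : Type*) [Field k] {F : Type*} [Field F] {Pt : Type*} (res : Pt → Type*)
    [∀ P, Field (res P)] [∀ P, Algebra k (res P)]
    (ord : Pt → F → ℤ) (d : ℕ) : AddSubgroup (K2 F) :=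
  AddSubgroup.closure
    { x | ∃ f g : Fˣ,
        (∀ P, ord P (f : F) ≠ 0 → Module.finrank k (res P) ≤ d) ∧
        (∀ P, ord P (g : F) ≠ 0 → Module.finrank k (res P) ≤ d) ∧
        x = symbol f g }
/-- `L_d`: the subgroup of `K₂(F)` generated by the symbols `{l, m}` with `l, m`
nonzero elements of the Riemann-Roch space `H⁰(C, O_C(d(O)))`. -/
def Lsub {k F : Type*} [Field k] [Field F] [Algebra k F] {Pt : Type*}
    (L : (Pt →₀ ℤ) → Submodule k F) (O : Pt) (d : ℤ) : AddSubgroup (K2 F) :=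
  AddSubgroup.closure
    { x | ∃ l m : Fˣ, (l : F) ∈ L (Finsupp.single O d) ∧
        (m : F) ∈ L (Finsupp.single O d) ∧ x = symbol l m }
namespace Stmt11

theorem symbol_mul_left {F : Type*} [Field F] (a b g : Fˣ) :
    symbol (a * b) g = symbol a g + symbol b g := by
  unfold symbol
  rw [← Submodule.Quotient.mk_add]
  congr 1
  rw [show Additive.ofMul (a * b) = Additive.ofMul a + Additive.ofMul b from rfl,
    TensorProduct.add_tmul]

theorem symbol_mul_right {F : Type*} [Field F] (f a b : Fˣ) :
    symbol f (a * b) = symbol f a + symbol f b := by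
  unfold symbol
  rw [← Submodule.Quotient.mk_add]
  congr 1
  rw [show Additive.ofMul (a * b) = Additive.ofMul a + Additive.ofMul b from rfl,
    TensorProduct.tmul_add]

theorem symbol_one_left {F : Type*} [Field F] (g : Fˣ) : symbol (1 : Fˣ) g = 0 := by
  unfold symbol
  rw [show Additive.ofMul (1 : Fˣ) = 0 from rfl, TensorProduct.zero_tmul]
  exact Submodule.Quotient.mk_zero _

theorem symbol_one_right {F : Type*} [Field F] (f : Fˣ) : symbol f (1 : Fˣ) = 0 := by
  unfold symbol
  rw [show Additive.ofMul (1 : Fˣ) = 0 from rfl, TensorProduct.tmul_zero]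
  exact Submodule.Quotient.mk_zero _

theorem symbol_inv_left {F : Type*} [Field F] (a g : Fˣ) :
    symbol a⁻¹ g = -symbol a g := by
  have h := symbol_mul_left a⁻¹ a g
  rw [inv_mul_cancel, symbol_one_left] at h
  exact eq_neg_of_add_eq_zero_left h.symm

theorem symbol_inv_right {F : Type*} [Field F] (f a : Fˣ) :
    symbol f a⁻¹ = -symbol f a := by
  have h := symbol_mul_right f a⁻¹ a
  rw [inv_mul_cancel, symbol_one_right] at h
  exact eq_neg_of_add_eq_zero_left h.symm

variable {k F : Type*} [Field k] [Field F] [Algebra k F]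
  {Pt : Type*} {res : Pt → Type*} [∀ P, Field (res P)] [∀ P, Algebra k (res P)]
  {ord : Pt → F → ℤ} {ev : ∀ P, F → res P}
  {L : (Pt →₀ ℤ) → Submodule k F} {t : ℕ}

theorem divDeg_eq_sum (D : Pt →₀ ℤ) {S : Finset Pt} (h : D.support ⊆ S) :
    divDeg k res D = ∑ P ∈ S, (Module.finrank k (res P) : ℤ) * D P := by
  apply finsum_eq_sum_of_support_subset
  intro P hP
  simp only [Function.mem_support] at hP
  have hD : D P ≠ 0 := by intro h0; rw [h0, mul_zero] at hP; exact hP rfl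
  exact h (Finsupp.mem_support_iff.mpr hD)

theorem divDeg_single (P : Pt) (n : ℤ) :
    divDeg k res (Finsupp.single P n) = (Module.finrank k (res P) : ℤ) * n := by
  rw [divDeg_eq_sum (Finsupp.single P n) Finsupp.support_single_subset]
  simp

theorem divDeg_sub (A B : Pt →₀ ℤ) :
    divDeg k res (A - B) = divDeg k res A - divDeg k res B := by
  classical
  rw [divDeg_eq_sum (A - B) (Finsupp.support_sub (f := A) (g := B)),
    divDeg_eq_sum A (Finset.subset_union_left),
    divDeg_eq_sum B (Finset.subset_union_right), ← Finset.sum_sub_distrib]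
  apply Finset.sum_congr rfl
  intro P _
  rw [Finsupp.sub_apply]
  ring

theorem divDeg_nonneg {D : Pt →₀ ℤ} (hD : ∀ P, 0 ≤ D P) : 0 ≤ divDeg k res D := by
  rw [divDeg_eq_sum D (subset_refl _)]
  exact Finset.sum_nonneg fun P _ => mul_nonneg (Int.natCast_nonneg _) (hD P)

theorem divDeg_zero : divDeg k res (0 : Pt →₀ ℤ) = 0 := by
  unfold divDeg; simp

theorem deg_le_divDeg {D : Pt →₀ ℤ} (hD : ∀ P, 0 ≤ D P) {P : Pt} (h : D P ≠ 0) :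
    (Module.finrank k (res P) : ℤ) ≤ divDeg k res D := by
  rw [divDeg_eq_sum D (subset_refl _)]
  have hP : P ∈ D.support := Finsupp.mem_support_iff.mpr h
  have h1 : 1 ≤ D P := by have := hD P; omega
  have h2 : (Module.finrank k (res P) : ℤ) * D P ≤
      ∑ Q ∈ D.support, (Module.finrank k (res Q) : ℤ) * D Q :=
    Finset.single_le_sum (f := fun Q => (Module.finrank k (res Q) : ℤ) * D Q)
      (fun Q _ => mul_nonneg (Int.natCast_nonneg _) (hD Q)) hP
  have h3 : (Module.finrank k (res P) : ℤ) ≤ (Module.finrank k (res P) : ℤ) * D P :=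
    le_mul_of_one_le_right (Int.natCast_nonneg _) h1
  exact le_trans h3 h2

section Curve

variable (hC : IsProjCurve k F res ord ev L t)
include hC

theorem deg_pos (P : Pt) : (1 : ℤ) ≤ (Module.finrank k (res P) : ℤ) := by
  haveI := hC.finiteDimensional_res P
  have : 0 < Module.finrank k (res P) := Module.finrank_pos
  exact_mod_cast this

theorem ord_one' (P : Pt) : ord P (1 : F) = 0 := by
  have h := hC.ord_algebraMap P 1 one_ne_zero
  rwa [map_one] at h

theorem ord_coe_mul (u v : Fˣ) (P : Pt) :
    ord P ((u * v : Fˣ) : F) = ord P (u : F) + ord P (v : F) := by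
  rw [Units.val_mul]
  exact hC.ord_mul P _ _ u.ne_zero v.ne_zero

theorem ord_coe_inv (u : Fˣ) (P : Pt) :
    ord P ((u⁻¹ : Fˣ) : F) = -ord P (u : F) := by
  have h := ord_coe_mul hC u u⁻¹ P
  rw [mul_inv_cancel] at h
  rw [Units.val_one, ord_one' hC] at h
  omega

/-- The divisor of a nonzero function, as a finsupp. -/
def ordDiv (u : Fˣ) : Pt →₀ ℤ :=
  Finsupp.onFinset (hC.support_finite (u : F) u.ne_zero).toFinset
    (fun P => ord P (u : F))
    (fun P h => (hC.support_finite (u : F) u.ne_zero).mem_toFinset.mpr h)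

@[simp] theorem ordDiv_apply (u : Fˣ) (P : Pt) : ordDiv hC u P = ord P (u : F) := rfl

theorem divDeg_ordDiv (u : Fˣ) : divDeg k res (ordDiv hC u) = 0 := by
  exact hC.degree_formula (u : F) u.ne_zero

theorem exists_sec {D : Pt →₀ ℤ} (h : (t : ℤ) ≤ divDeg k res D) :
    ∃ u : Fˣ, (u : F) ∈ L D := by
  have hrr := hC.rr_ineq D
  have h1 : (1 : ℤ) ≤ (Module.finrank k (L D) : ℤ) := by linarith
  by_contra hc
  push_neg at hc
  have hbot : L D = ⊥ := by
    rw [Submodule.eq_bot_iff]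
    intro x hx
    by_contra hx0
    exact hc (Units.mk0 x hx0) hx
  rw [hbot, finrank_bot] at h1
  omega

theorem pair {O : Pt} (hO : Module.finrank k (res O) = 1) {d : ℕ}
    (E : Pt →₀ ℤ) (hE0 : ∀ P, 0 ≤ E P) (hEO : E O = 0)
    (hEd : divDeg k res E ≤ d) :
    ∃ (h : Fˣ) (E' : Pt →₀ ℤ),
      (h : F) ∈ L (Finsupp.single O ((d : ℤ) + t)) ∧
      (∀ P, 0 ≤ E' P) ∧ E' O = 0 ∧ divDeg k res E' ≤ t ∧
      (∀ P, P ≠ O → ord P (h : F) = E P + E' P) ∧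
      ord O (h : F) = -(divDeg k res E + divDeg k res E') := by
  classical
  set s := divDeg k res E with hs
  have hs0 : 0 ≤ s := divDeg_nonneg hE0
  set D : Pt →₀ ℤ := Finsupp.single O (s + t) - E with hD
  have hDdeg : divDeg k res D = t := by
    rw [hD, divDeg_sub, divDeg_single, hO, ← hs]
    push_cast
    ring
  obtain ⟨u, hu⟩ := exists_sec hC (by rw [hDdeg])
  have hval : ∀ P, 0 ≤ D P + ord P (u : F) :=
    ((hC.mem_L D (u : F)).mp hu) u.ne_zero
  have hDP : ∀ P, P ≠ O → D P = -E P := by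
    intro P hP
    rw [hD, Finsupp.sub_apply, Finsupp.single_apply, if_neg (fun h => hP h.symm), zero_sub]
  have hDO : D O = s + t := by
    rw [hD, Finsupp.sub_apply, Finsupp.single_apply, if_pos rfl, hEO, sub_zero]
  have hordP : ∀ P, P ≠ O → E P ≤ ord P (u : F) := by
    intro P hP
    have := hval P
    rw [hDP P hP] at this
    omega
  have hordO : -(s + t) ≤ ord O (u : F) := by
    have := hval O
    rw [hDO] at this
    omega
  set E' : Pt →₀ ℤ := ordDiv hC u - Finsupp.single O (ord O (u : F)) - E with hE'
  have hE'P : ∀ P, P ≠ O → E' P = ord P (u : F) - E P := by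
    intro P hP
    rw [hE']
    rw [Finsupp.sub_apply, Finsupp.sub_apply, ordDiv_apply, Finsupp.single_apply,
      if_neg (fun h => hP h.symm)]
    ring
  have hE'O : E' O = 0 := by
    rw [hE']
    rw [Finsupp.sub_apply, Finsupp.sub_apply, ordDiv_apply, Finsupp.single_apply,
      if_pos rfl, hEO]
    ring
  have hE'0 : ∀ P, 0 ≤ E' P := by
    intro P
    by_cases hP : P = O
    · rw [hP, hE'O]
    · rw [hE'P P hP]
      have := hordP P hP
      omega
  have hE'deg : divDeg k res E' = -ord O (u : F) - s := by
    rw [hE', divDeg_sub, divDeg_sub, divDeg_ordDiv, divDeg_single, hO, ← hs]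
    push_cast
    ring
  have hordOu : ord O (u : F) = -(s + divDeg k res E') := by
    rw [hE'deg]; ring
  have hE't : divDeg k res E' ≤ t := by
    rw [hE'deg]; omega
  refine ⟨u, E', ?_, hE'0, hE'O, hE't, ?_, ?_⟩
  · rw [hC.mem_L]
    intro _ P
    by_cases hP : P = O
    · subst hP
      rw [Finsupp.single_apply, if_pos rfl]
      omega
    · rw [Finsupp.single_apply, if_neg (fun h => hP h.symm)]
      have h1 := hordP P hP
      have h2 := hE0 P
      omega
  · intro P hP
    rw [hE'P P hP]
    ring
  · exact hordOu

theorem sel {d : ℕ} (hd : 2 * t ≤ d) :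
    ∀ N : ℕ, ∀ Z : Pt →₀ ℤ, (∀ P, 0 ≤ Z P) →
      (∀ P, Z P ≠ 0 → (Module.finrank k (res P) : ℤ) ≤ d) →
      (t : ℤ) + 1 ≤ divDeg k res Z → (divDeg k res Z).toNat ≤ N →
      ∃ E : Pt →₀ ℤ, (∀ P, 0 ≤ E P ∧ E P ≤ Z P) ∧
        ((t : ℤ) + 1 ≤ divDeg k res E) ∧ divDeg k res E ≤ d := by
  classical
  intro N
  induction N with
  | zero =>
    intro Z _ _ ht hN
    exfalso
    omega
  | succ N ih =>
    intro Z hZ0 hZd ht hN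
    by_cases hle : divDeg k res Z ≤ d
    · exact ⟨Z, fun P => ⟨hZ0 P, le_refl _⟩, ht, hle⟩
    · push_neg at hle
      have hex : ∃ P, Z P ≠ 0 := by
        by_contra hc
        push_neg at hc
        have hZeq : Z = 0 := Finsupp.ext hc
        rw [hZeq, divDeg_zero] at ht
        omega
      obtain ⟨P, hP⟩ := hex
      have hPd := hZd P hP
      have hP1 : 1 ≤ Z P := by have := hZ0 P; omega
      have hdp := deg_pos hC P
      by_cases hcase : (t : ℤ) + 1 ≤ (Module.finrank k (res P) : ℤ)
      · refine ⟨Finsupp.single P 1, ?_, ?_, ?_⟩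
        · intro Q
          rw [Finsupp.single_apply]
          by_cases hQ : P = Q
          · rw [if_pos hQ, ← hQ]; exact ⟨by omega, hP1⟩
          · rw [if_neg hQ]; exact ⟨le_refl _, hZ0 Q⟩
        · rw [divDeg_single, mul_one]; exact hcase
        · rw [divDeg_single, mul_one]; exact hPd
      · push_neg at hcase
        set Z' := Z - Finsupp.single P 1 with hZ'
        have hZ'app : ∀ Q, Z' Q = Z Q - (if P = Q then 1 else 0) := by
          intro Q
          rw [hZ', Finsupp.sub_apply, Finsupp.single_apply]
        have hZ'0 : ∀ Q, 0 ≤ Z' Q := by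
          intro Q
          rw [hZ'app]
          by_cases hQ : P = Q
          · rw [if_pos hQ, ← hQ]; omega
          · rw [if_neg hQ]; have := hZ0 Q; omega
        have hZ'supp : ∀ Q, Z' Q ≠ 0 → (Module.finrank k (res Q) : ℤ) ≤ d := by
          intro Q hQ
          apply hZd Q
          intro h0
          rw [hZ'app, h0] at hQ
          by_cases hPQ : P = Q
          · rw [← hPQ] at h0; omega
          · rw [if_neg hPQ] at hQ; omega
        have hZ'deg : divDeg k res Z' = divDeg k res Z - (Module.finrank k (res P) : ℤ) := by
          rw [hZ', divDeg_sub, divDeg_single, mul_one]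
        have ht' : (t : ℤ) + 1 ≤ divDeg k res Z' := by
          have hdcast : (2 * t : ℤ) ≤ (d : ℤ) := by exact_mod_cast hd
          omega
        have hN' : (divDeg k res Z').toNat ≤ N := by omega
        obtain ⟨E, hE, h1, h2⟩ := ih Z' hZ'0 hZ'supp ht' hN'
        refine ⟨E, fun Q => ⟨(hE Q).1, ?_⟩, h1, h2⟩
        have h3 := (hE Q).2
        rw [hZ'app] at h3
        by_cases hPQ : P = Q
        · rw [if_pos hPQ] at h3; omega
        · rw [if_neg hPQ] at h3; omega

end Curve

end Stmt11
namespace Stmt11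

section Main

variable {k F : Type*} [Field k] [Field F] [Algebra k F]
  {Pt : Type*} {res : Pt → Type*} [∀ P, Field (res P)] [∀ P, Algebra k (res P)]
  {ord : Pt → F → ℤ} {ev : ∀ P, F → res P}
  {L : (Pt →₀ ℤ) → Submodule k F} {t : ℕ}

/-- The subgroup of `Fˣ` generated by the nonzero elements of `L(n O)`. -/
abbrev Gsub (L : (Pt →₀ ℤ) → Submodule k F) (O : Pt) (n : ℤ) : Subgroup Fˣ :=
  Subgroup.closure {u : Fˣ | (u : F) ∈ L (Finsupp.single O n)}

theorem symbol_mem_Lsub {O : Pt} {n : ℤ} {f g : Fˣ}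
    (hf : f ∈ Gsub L O n) (hg : g ∈ Gsub L O n) : symbol f g ∈ Lsub L O n := by
  have key : ∀ m : Fˣ, (m : F) ∈ L (Finsupp.single O n) →
      ∀ u : Fˣ, u ∈ Gsub L O n → symbol u m ∈ Lsub L O n := by
    intro m hm u hu
    induction hu using Subgroup.closure_induction with
    | mem x hx => exact AddSubgroup.subset_closure ⟨x, m, hx, hm, rfl⟩
    | one => rw [symbol_one_left]; exact zero_mem _
    | mul x y hx hy ihx ihy => rw [symbol_mul_left]; exact add_mem ihx ihy
    | inv x hx ihx => rw [symbol_inv_left]; exact neg_mem ihx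
  induction hg using Subgroup.closure_induction with
  | mem x hx => exact key x hx f hf
  | one => rw [symbol_one_right]; exact zero_mem _
  | mul x y hx hy ihx ihy => rw [symbol_mul_right]; exact add_mem ihx ihy
  | inv x hx ihx => rw [symbol_inv_right]; exact neg_mem ihx

open Classical in
/-- The total degree of the polar divisor away from `O`. -/
def negA (ordv : Pt → F → ℤ) (O : Pt) (f : Fˣ) : ℕ :=
  ∑ᶠ P, if P = O then 0 else (-(ordv P (f : F))).toNat

open Classical in
theorem negA_eq_sum {O : Pt} (f : Fˣ) {S : Finset Pt}
    (h : ∀ P, ord P (f : F) ≠ 0 → P ∈ S) :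
    negA ord O f = ∑ P ∈ S, if P = O then 0 else (-(ord P (f : F))).toNat := by
  classical
  apply finsum_eq_sum_of_support_subset
  intro P hP
  simp only [Function.mem_support] at hP
  apply h
  intro h0
  apply hP
  rw [h0]
  simp

variable (hC : IsProjCurve k F res ord ev L t)
include hC

theorem phase2_base {O : Pt} {d : ℕ} {f : Fˣ}
    (hpos : ∀ P, P ≠ O → 0 ≤ ord P (f : F))
    (hsmall : -(ord O (f : F)) ≤ (d : ℤ) + t) :
    f ∈ Gsub L O ((d : ℤ) + t) := by
  classical
  apply Subgroup.subset_closure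
  show (f : F) ∈ L (Finsupp.single O ((d : ℤ) + t))
  rw [hC.mem_L]
  intro _ P
  by_cases hP : P = O
  · subst hP
    rw [Finsupp.single_apply, if_pos rfl]
    omega
  · rw [Finsupp.single_apply, if_neg (fun h => hP h.symm)]
    have := hpos P hP
    omega

theorem phase2 {O : Pt} (hO : Module.finrank k (res O) = 1) {d : ℕ} (hd : 2 * t ≤ d) :
    ∀ N : ℕ, ∀ f : Fˣ,
      (∀ P, P ≠ O → 0 ≤ ord P (f : F)) →
      (∀ P, P ≠ O → ord P (f : F) ≠ 0 → (Module.finrank k (res P) : ℤ) ≤ d) →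
      (-(ord O (f : F))).toNat ≤ N →
      f ∈ Gsub L O ((d : ℤ) + t) := by
  classical
  intro N
  induction N with
  | zero =>
    intro f hpos hsupp hN
    exact phase2_base hC hpos (by omega)
  | succ N ih =>
    intro f hpos hsupp hN
    by_cases hsmall : -(ord O (f : F)) ≤ (d : ℤ) + t
    · exact phase2_base hC hpos hsmall
    · push_neg at hsmall
      set m := -(ord O (f : F)) with hm
      set Z := ordDiv hC f - Finsupp.single O (ord O (f : F)) with hZdef
      have hZapp : ∀ P, P ≠ O → Z P = ord P (f : F) := by
        intro P hP
        rw [hZdef, Finsupp.sub_apply, ordDiv_apply, Finsupp.single_apply,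
          if_neg (fun h => hP h.symm), sub_zero]
      have hZO : Z O = 0 := by
        rw [hZdef, Finsupp.sub_apply, ordDiv_apply, Finsupp.single_apply, if_pos rfl, sub_self]
      have hZ0 : ∀ P, 0 ≤ Z P := by
        intro P
        by_cases hP : P = O
        · rw [hP, hZO]
        · rw [hZapp P hP]; exact hpos P hP
      have hZdeg : divDeg k res Z = m := by
        rw [hZdef, divDeg_sub, divDeg_ordDiv, divDeg_single, hO, hm]
        push_cast
        ring
      have hdcast : (2 * t : ℤ) ≤ (d : ℤ) := by exact_mod_cast hd
      have hZsupp : ∀ P, Z P ≠ 0 → (Module.finrank k (res P) : ℤ) ≤ d := by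
        intro P hP
        have hPO : P ≠ O := by intro h; rw [h, hZO] at hP; exact hP rfl
        exact hsupp P hPO (by rw [← hZapp P hPO]; exact hP)
      obtain ⟨E, hE, hEt1, hEd⟩ :=
        sel hC hd (divDeg k res Z).toNat Z hZ0 hZsupp (by omega) le_rfl
      have hEO : E O = 0 :=
        le_antisymm (by have := (hE O).2; rw [hZO] at this; exact this) (hE O).1
      obtain ⟨h₀, E₀, hmem₀, hE₀0, hE₀O, hE₀t, hord₀, hordO₀⟩ :=
        pair hC hO E (fun P => (hE P).1) hEO hEd
      obtain ⟨h₁, E₁, hmem₁, hE₁0, hE₁O, hE₁t, hord₁, hordO₁⟩ :=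
        pair hC hO (d := d) E₀ hE₀0 hE₀O (by omega)
      set g := f * h₀⁻¹ * h₁ with hg
      have hordg : ∀ P, ord P (g : F) = ord P (f : F) - ord P (h₀ : F) + ord P (h₁ : F) := by
        intro P
        rw [hg, ord_coe_mul hC, ord_coe_mul hC, ord_coe_inv hC]
        ring
      have hEdeg0 : 0 ≤ divDeg k res E := divDeg_nonneg (fun P => (hE P).1)
      have hE₀deg0 : 0 ≤ divDeg k res E₀ := divDeg_nonneg hE₀0
      have hE₁deg0 : 0 ≤ divDeg k res E₁ := divDeg_nonneg hE₁0
      have c1 : ∀ P, P ≠ O → 0 ≤ ord P (g : F) := by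
        intro P hP
        rw [hordg P, hord₀ P hP, hord₁ P hP]
        have h1 := (hE P).2
        rw [hZapp P hP] at h1
        have := hE₁0 P
        omega
      have c2 : ∀ P, P ≠ O → ord P (g : F) ≠ 0 → (Module.finrank k (res P) : ℤ) ≤ d := by
        intro P hP hne
        rw [hordg P, hord₀ P hP, hord₁ P hP] at hne
        by_cases hzf : ord P (f : F) = 0
        · have hEP : E P = 0 := by
            have h1 := (hE P).2
            rw [hZapp P hP, hzf] at h1
            have h2 := (hE P).1
            omega
          have hE₁ne : E₁ P ≠ 0 := by
            intro h'
            apply hne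
            rw [hzf, hEP, h']
            ring
          have := deg_le_divDeg (k := k) (res := res) hE₁0 hE₁ne
          omega
        · exact hsupp P hP hzf
      have c3 : (-(ord O (g : F))).toNat ≤ N := by
        have hgO : ord O (g : F) = ord O (f : F) - ord O (h₀ : F) + ord O (h₁ : F) := hordg O
        rw [hordO₀, hordO₁] at hgO
        omega
      have hgG := ih g c1 c2 c3
      have hh₀ : h₀ ∈ Gsub L O ((d : ℤ) + t) := Subgroup.subset_closure hmem₀
      have hh₁ : h₁ ∈ Gsub L O ((d : ℤ) + t) := Subgroup.subset_closure hmem₁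
      have hfg : f = g * h₁⁻¹ * h₀ := by rw [hg]; group
      rw [hfg]
      exact mul_mem (mul_mem hgG (inv_mem hh₁)) hh₀

theorem phase1 {O : Pt} (hO : Module.finrank k (res O) = 1) {d : ℕ} (hd : 2 * t ≤ d) :
    ∀ N : ℕ, ∀ f : Fˣ,
      (∀ P, P ≠ O → ord P (f : F) ≠ 0 → (Module.finrank k (res P) : ℤ) ≤ d) →
      negA ord O f ≤ N →
      f ∈ Gsub L O ((d : ℤ) + t) := by
  classical
  intro N
  induction N with
  | zero =>
    intro f hsupp hA
    refine phase2 hC hO hd (-(ord O (f : F))).toNat f ?_ hsupp le_rfl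
    intro P hP
    by_contra hneg
    push_neg at hneg
    have hPne : ord P (f : F) ≠ 0 := by omega
    have h2 : (if P = O then 0 else (-(ord P (f : F))).toNat) ≤ negA ord O f := by
      rw [negA_eq_sum f (S := (hC.support_finite (f : F) f.ne_zero).toFinset)
        (fun Q hQ => (hC.support_finite (f : F) f.ne_zero).mem_toFinset.mpr hQ)]
      exact Finset.single_le_sum
        (f := fun Q => if Q = O then 0 else (-(ord Q (f : F))).toNat)
        (fun Q _ => Nat.zero_le _)
        ((hC.support_finite (f : F) f.ne_zero).mem_toFinset.mpr hPne)
    rw [if_neg hP] at h2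
    omega
  | succ N ih =>
    intro f hsupp hA
    by_cases hpole : ∀ P, P ≠ O → 0 ≤ ord P (f : F)
    · exact phase2 hC hO hd _ f hpole hsupp le_rfl
    · push_neg at hpole
      obtain ⟨P₀, hP₀O, hP₀⟩ := hpole
      have hP₀ne : ord P₀ (f : F) ≠ 0 := by omega
      have hP₀d := hsupp P₀ hP₀O hP₀ne
      have hE0 : ∀ P, 0 ≤ (Finsupp.single P₀ (1 : ℤ)) P := by
        intro P
        rw [Finsupp.single_apply]
        split <;> omega
      have hEO : (Finsupp.single P₀ (1 : ℤ)) O = 0 := by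
        rw [Finsupp.single_apply, if_neg (fun h => hP₀O h)]
      have hEd : divDeg k res (Finsupp.single P₀ (1 : ℤ)) ≤ d := by
        rw [divDeg_single, mul_one]
        exact hP₀d
      obtain ⟨h₀, E', hmem, hE'0, hE'O, hE't, hord, hordO'⟩ := pair hC hO _ hE0 hEO hEd
      set g := f * h₀ with hg
      have hordg : ∀ P, ord P (g : F) = ord P (f : F) + ord P (h₀ : F) :=
        fun P => ord_coe_mul hC f h₀ P
      have hdcast : (2 * t : ℤ) ≤ (d : ℤ) := by exact_mod_cast hd
      have c2 : ∀ P, P ≠ O → ord P (g : F) ≠ 0 → (Module.finrank k (res P) : ℤ) ≤ d := by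
        intro P hP hne
        rw [hordg P, hord P hP] at hne
        by_cases hzf : ord P (f : F) = 0
        · by_cases hPP : P = P₀
          · rw [hPP]; exact hP₀d
          · have hsing : (Finsupp.single P₀ (1 : ℤ)) P = 0 := by
              rw [Finsupp.single_apply, if_neg (fun h => hPP h.symm)]
            have hE'ne : E' P ≠ 0 := by
              intro h'
              apply hne
              rw [hzf, hsing, h']
              ring
            have := deg_le_divDeg (k := k) (res := res) hE'0 hE'ne
            omega
        · exact hsupp P hP hzf
      have cA : negA ord O g ≤ N := by
        set S := (hC.support_finite (f : F) f.ne_zero).toFinset ∪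
          (hC.support_finite (g : F) g.ne_zero).toFinset with hS
        have hfS : negA ord O f
            = ∑ P ∈ S, if P = O then 0 else (-(ord P (f : F))).toNat :=
          negA_eq_sum f (fun Q hQ => Finset.mem_union_left _
            ((hC.support_finite (f : F) f.ne_zero).mem_toFinset.mpr hQ))
        have hgS : negA ord O g
            = ∑ P ∈ S, if P = O then 0 else (-(ord P (g : F))).toNat :=
          negA_eq_sum g (fun Q hQ => Finset.mem_union_right _
            ((hC.support_finite (g : F) g.ne_zero).mem_toFinset.mpr hQ))
        have hlt : (∑ P ∈ S, if P = O then 0 else (-(ord P (g : F))).toNat)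
            < ∑ P ∈ S, if P = O then 0 else (-(ord P (f : F))).toNat := by
          apply Finset.sum_lt_sum
          · intro P _
            by_cases hP : P = O
            · rw [if_pos hP, if_pos hP]
            · rw [if_neg hP, if_neg hP, hordg P, hord P hP]
              have := hE0 P
              have := hE'0 P
              omega
          · refine ⟨P₀, Finset.mem_union_left _
              ((hC.support_finite (f : F) f.ne_zero).mem_toFinset.mpr hP₀ne), ?_⟩
            rw [if_neg hP₀O, if_neg hP₀O, hordg P₀, hord P₀ hP₀O, Finsupp.single_apply,
              if_pos rfl]
            have := hE'0 P₀
            omega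
        omega
      have hgG := ih g c2 cA
      have hh : h₀ ∈ Gsub L O ((d : ℤ) + t) := Subgroup.subset_closure hmem
      have hfg : f = g * h₀⁻¹ := by rw [hg]; group
      rw [hfg]
      exact mul_mem hgG (inv_mem hh)

theorem main_lemma {O : Pt} (hO : Module.finrank k (res O) = 1) {d : ℕ} (hd : 2 * t ≤ d)
    (f : Fˣ) (hf : ∀ P, ord P (f : F) ≠ 0 → Module.finrank k (res P) ≤ d) :
    f ∈ Gsub L O ((d : ℤ) + t) :=
  phase1 hC hO hd (negA ord O f) f
    (fun P _ hne => by exact_mod_cast hf P hne) le_rfl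

end Main

end Stmt11
/-- remark after Lemma `3tlemma`.  Let `C` be a regular,
irreducible curve, projective over `k`, with function field `F`, arithmetic genus `t`
and a `k`-rational point `O`.  For every `d ≥ 2t` one has `F_d ⊆ L_{d+t}` in
`K₂(F)`. -/
theorem statement11 (k F : Type*) [Field k] [Field F] [Algebra k F]
    {Pt : Type*} (res : Pt → Type*) [∀ P, Field (res P)] [∀ P, Algebra k (res P)]
    (ord : Pt → F → ℤ) (ev : ∀ P, F → res P)
    (L : (Pt →₀ ℤ) → Submodule k F) (t : ℕ)
    (hC : IsProjCurve k F res ord ev L t)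
    (O : Pt) (hO : Module.finrank k (res O) = 1)
    (d : ℕ) (hd : 2 * t ≤ d) :
    Fsub k res ord d ≤ Lsub L O ((d : ℤ) + t) := by
  refine (AddSubgroup.closure_le _).mpr ?_
  rintro x ⟨f, g, hf, hg, rfl⟩
  exact Set.mem_of_eq_of_mem rfl
    (Stmt11.symbol_mem_Lsub (Stmt11.main_lemma hC hO hd f hf)
      (Stmt11.main_lemma hC hO hd g hg))

end
end
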